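/- Let p ≥ 1 be an integer and 𝐇 a set of graphs such that every 𝐇-free graph is perfectly divisible. Then every ((p−1)K₂ ∪ 𝐇)-free graph G satisfies χ(G) ≤ C(ω(G)−1+2p, 2p), where C(a,b) denotes the binomial coefficient. -/

import Mathlib

open SimpleGraph

/-- `pK₂`: the disjoint union of `p` copies of the single-edge graph `K₂`. -/
def pK2 (p : ℕ) : SimpleGraph (Fin p × Fin 2) where
  Adj x y := x.1 = y.1 ∧ x.2 ≠ y.2
  symm := ⟨fun _ _ h => ⟨h.1.symm, h.2.symm⟩⟩
  loopless := ⟨fun _ h => h.2 rfl⟩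

/-- A graph is perfect if every induced subgraph has chromatic number equal to
its clique number. -/
def IsPerfect {V : Type} (G : SimpleGraph V) : Prop :=
  ∀ s : Set V, (G.induce s).chromaticNumber = ((G.induce s).cliqueNum : ℕ∞)

/-- A graph is perfectly divisible if the vertex set of every (nonempty) induced
subgraph `H` can be partitioned into sets `A` and `B` such that `H[A]` is perfect
and `ω(H[B]) < ω(H)`. -/
def PerfectlyDivisible {V : Type} (G : SimpleGraph V) : Prop :=
  ∀ s : Set V, s.Nonempty → ∃ A B : Set V, A ∪ B = s ∧ Disjoint A B ∧
    IsPerfect (G.induce A) ∧ (G.induce B).cliqueNum < (G.induce s).cliqueNum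

/-!
Induction on `p`, and for fixed `p` on `ω`. For `p = 1` the graph is perfectly divisible:
splitting off a perfect part costs `ω` colours and lowers `ω`, so `χ ≤ C(ω + 1, 2)`.
For `p ≥ 2` take a maximum clique `a, w₀, …, w_{ω-2}`. The neighbourhood of `a` has smaller
clique number. A non-neighbour of `a` is either complete to all `wⱼ` (these vertices form a
stable set, as `ω` is maximum) or has a first non-neighbour `wⱼ`; the class of the latter is
anticomplete to the edge `a wⱼ`, hence `((p - 2)K₂ ∪ 𝐇)`-free, and complete to `w₀, …, w_{j-1}`,
hence of clique number at most `ω - j`. The hockey-stick identity sums these bounds to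
`C(ω - 1 + 2p, 2p)`.
-/

namespace SimpleGraph

variable {U V W : Type} {G : SimpleGraph V} {F : SimpleGraph W}

section Cliques

theorem cliqueFree_of_cliqueNum_lt [Finite V] {n : ℕ} (h : G.cliqueNum < n) : G.CliqueFree n :=
  fun _ ht => h.not_ge (ht.card_eq ▸ ht.isClique.card_le_cliqueNum)

theorem IsClique.finsetMap_embedding {t : Finset W} (ht : F.IsClique t) (f : F ↪g G) :
    G.IsClique (t.map f.toEmbedding : Set V) := by
  intro x hx y hy hxy
  simp only [Finset.coe_map, Set.mem_image, Finset.mem_coe] at hx hy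
  obtain ⟨i, hi, rfl⟩ := hx
  obtain ⟨j, hj, rfl⟩ := hy
  exact f.map_adj_iff.2 (ht hi hj fun h => hxy (h ▸ rfl))

theorem Embedding.cliqueNum_le [Finite V] (f : F ↪g G) : F.cliqueNum ≤ G.cliqueNum := by
  obtain ⟨t, ht⟩ := F.exists_isNClique_cliqueNum
  simpa [ht.card_eq] using (ht.isClique.finsetMap_embedding f).card_le_cliqueNum

theorem cliqueNum_induce_mono [Finite V] {s t : Set V} (h : s ⊆ t) :
    (G.induce s).cliqueNum ≤ (G.induce t).cliqueNum :=
  (induceHomOfLE G h).cliqueNum_le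

theorem cliqueNum_induce_add_card_le [Finite V] {s : Set V} {t : Finset V} (ht : G.IsClique t)
    (hst : ∀ u ∈ s, ∀ x ∈ t, G.Adj x u) : (G.induce s).cliqueNum + t.card ≤ G.cliqueNum := by
  classical
  obtain ⟨c, hc⟩ := (G.induce s).exists_isNClique_cliqueNum
  rw [isNClique_induce_iff] at hc
  set c' := c.map (Function.Embedding.subtype _)
  have hc's : ∀ u ∈ c', u ∈ s := fun u hu => by
    obtain ⟨v, -, rfl⟩ := Finset.mem_map.1 hu
    exact v.2
  have hdisj : Disjoint c' t :=
    Finset.disjoint_left.2 fun u hu hut => (hst u (hc's u hu) u hut).ne rfl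
  have hclique : G.IsClique ((c' ∪ t : Finset V) : Set V) := by
    have := G.symm
    rw [Finset.coe_union, isClique_iff, Set.pairwise_union_of_symm]
    exact ⟨hc.isClique, ht, fun u hu x hx _ => (hst u (hc's u hu) x hx).symm⟩
  simpa [Finset.card_union_of_disjoint hdisj, hc.card_eq] using hclique.card_le_cliqueNum

end Cliques

section Cover

theorem colorable_sum_of_forall_exists_mem {ι : Type} [Fintype ι] (S : ι → Set V) (c : ι → ℕ)
    (hS : ∀ v, ∃ i, v ∈ S i) (hc : ∀ i, (G.induce (S i)).Colorable (c i)) :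
    G.Colorable (∑ i, c i) := by
  classical
  choose idx hidx using hS
  let C i := (hc i).some
  -- colourings of the `G[S i]` extended by `0` to all of `V`, to avoid dependent types
  let f (i : ι) (v : V) : ℕ := if h : v ∈ S i then C i ⟨v, h⟩ else 0
  have hf_lt (v : V) : f (idx v) v < c (idx v) := by simp [f, hidx v]
  have hf_ne {i : ι} {u v : V} (hu : u ∈ S i) (hv : v ∈ S i) (huv : G.Adj u v) :
      f i u ≠ f i v := by
    simpa [f, hu, hv, Fin.val_inj] using (C i).valid (v := ⟨u, hu⟩) (w := ⟨v, hv⟩) huv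
  let col : G.Coloring (Σ i, Fin (c i)) := Coloring.mk (fun v => ⟨idx v, f (idx v) v, hf_lt v⟩)
    fun {u v} huv heq => by
      have hidx_eq : idx u = idx v := congrArg Sigma.fst heq
      have hf_eq : f (idx u) u = f (idx v) v := congrArg (fun x => (x.2 : ℕ)) heq
      rw [hidx_eq] at hf_eq
      exact hf_ne (hidx_eq ▸ hidx u) (hidx v) huv hf_eq
  simpa using col.colorable

theorem colorable_induce_sum_of_subset_iUnion {ι : Type} [Fintype ι] {s : Set V}
    (S : ι → Set V) (c : ι → ℕ) (hs : s ⊆ ⋃ i, S i)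
    (hc : ∀ i, (G.induce (S i)).Colorable (c i)) : (G.induce s).Colorable (∑ i, c i) :=
  colorable_sum_of_forall_exists_mem (fun i => Subtype.val ⁻¹' S i) c
    (fun v => by simpa using hs v.2)
    fun i => (hc i).of_hom ⟨fun v => ⟨v.1.1, v.2⟩, id⟩

theorem colorable_induce_add_of_subset_union {s A B : Set V} {a b : ℕ} (hs : s ⊆ A ∪ B)
    (hA : (G.induce A).Colorable a) (hB : (G.induce B).Colorable b) :
    (G.induce s).Colorable (a + b) := by
  simpa using colorable_induce_sum_of_subset_iUnion (fun i : Bool => cond i A B)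
    (fun i => cond i a b) (Set.union_eq_iUnion ▸ hs) (Bool.rec hB hA)

theorem colorable_add_of_induce_of_induce_compl (s : Set V) {a b : ℕ}
    (hs : (G.induce s).Colorable a) (hsc : (G.induce sᶜ).Colorable b) : G.Colorable (a + b) :=
  (colorable_induce_add_of_subset_union (by simp) hs hsc).of_hom (induceUnivIso G).symm.toHom

end Cover

section Embeddings

theorem isEmpty_embedding_induce (h : IsEmpty (F ↪g G)) (s : Set V) :
    IsEmpty (F ↪g G.induce s) :=
  ⟨fun f => h.false ((Embedding.induce s).comp f)⟩

def Embedding.sumElim {A : SimpleGraph U} (f : A ↪g G) (g : F ↪g G)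
    (h : ∀ x y, f x ≠ g y ∧ ¬G.Adj (f x) (g y)) : A ⊕g F ↪g G where
  toFun := Sum.elim f g
  inj' := f.injective.sumElim g.injective fun x y => (h x y).1
  map_rel_iff' {x y} := by
    rcases x with x | x <;> rcases y with y | y
    · simp
    · simpa using (h x y).2
    · simpa [G.adj_comm] using (h y x).2
    · simp

def Adj.pK2OneEmbedding {a b : V} (hab : G.Adj a b) : pK2 1 ↪g G where
  toFun x := ![a, b] x.2
  inj' := by
    rintro ⟨i, r⟩ ⟨j, s⟩
    fin_cases i; fin_cases j; fin_cases r <;> fin_cases s <;> simp [hab.ne, hab.ne']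
  map_rel_iff' {x y} := by
    rcases x with ⟨i, r⟩; rcases y with ⟨j, s⟩
    change G.Adj (![a, b] r) (![a, b] s) ↔ i = j ∧ r ≠ s
    fin_cases i; fin_cases j; fin_cases r <;> fin_cases s <;> simp [hab, hab.symm]

end Embeddings

end SimpleGraph

section PK2

variable {V W : Type} {G : SimpleGraph V} {F : SimpleGraph W}

def pK2ZeroSumIso (F : SimpleGraph W) : pK2 0 ⊕g F ≃g F where
  toEquiv := Equiv.emptySum _ _
  map_rel_iff' {x y} := by
    rcases x with x | x
    · exact x.1.elim0
    rcases y with y | y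
    · exact y.1.elim0
    simp

def pK2SuccIso (k : ℕ) : pK2 (k + 1) ≃g pK2 k ⊕g pK2 1 where
  toEquiv := (finSumFinEquiv.symm.prodCongr (Equiv.refl _)).trans (Equiv.sumProdDistrib _ _ _)
  map_rel_iff' {x y} := by
    rcases x with ⟨i, r⟩; rcases y with ⟨j, s⟩
    induction i using Fin.lastCases <;> induction j using Fin.lastCases <;>
      simp [pK2, Fin.ext_iff] <;> omega

def pK2SuccSumIso (k : ℕ) (F : SimpleGraph W) : pK2 (k + 1) ⊕g F ≃g (pK2 k ⊕g F) ⊕g pK2 1 :=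
  ((pK2SuccIso k).sumCongr .refl).trans <|
    Iso.sumAssoc.trans <| (Iso.refl.sumCongr Iso.sumComm).trans Iso.sumAssoc.symm

theorem isEmpty_embedding_of_isEmpty_pK2_zero_sum (h : IsEmpty (pK2 0 ⊕g F ↪g G)) :
    IsEmpty (F ↪g G) :=
  ⟨fun f => h.false (f.comp (pK2ZeroSumIso F).toEmbedding)⟩

theorem isEmpty_pK2_sum_embedding_induce {k : ℕ} (hG : IsEmpty (pK2 (k + 1) ⊕g F ↪g G))
    {a b : V} (hab : G.Adj a b) {s : Set V} (ha : ∀ u ∈ s, u ≠ a ∧ ¬G.Adj u a)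
    (hb : ∀ u ∈ s, u ≠ b ∧ ¬G.Adj u b) : IsEmpty (pK2 k ⊕g F ↪g G.induce s) :=
  ⟨fun e => hG.false <| (((Embedding.induce s).comp e).sumElim hab.pK2OneEmbedding <| by
      rintro x ⟨_, r⟩
      fin_cases r
      exacts [ha _ (e x).2, hb _ (e x).2]).comp (pK2SuccSumIso k F).toEmbedding⟩

end PK2

section Perfect

variable {V : Type} [Finite V] {G : SimpleGraph V}

theorem IsPerfect.colorable (h : IsPerfect G) : G.Colorable G.cliqueNum :=
  ((chromaticNumber_le_iff_colorable.1 (h Set.univ).le).of_hom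
    (induceUnivIso G).symm.toHom).mono (cliqueNum_induce_le _)

theorem PerfectlyDivisible.colorable_induce (hG : PerfectlyDivisible G) (s : Set V) :
    (G.induce s).Colorable (((G.induce s).cliqueNum + 1).choose 2) := by
  induction hω : (G.induce s).cliqueNum using Nat.strong_induction_on generalizing s with
  | _ m ih =>
  obtain rfl | hs := s.eq_empty_or_nonempty
  · exact Colorable.of_isEmpty _
  obtain ⟨A, B, hAB, -, hA, hB⟩ := hG s hs
  have hAcol : (G.induce A).Colorable m :=
    hA.colorable.mono (hω ▸ cliqueNum_induce_mono (hAB ▸ Set.subset_union_left))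
  have hBcol : (G.induce B).Colorable (m.choose 2) :=
    (ih _ (hω ▸ hB) B rfl).mono (Nat.choose_le_choose _ (by omega))
  rw [Nat.choose_succ_succ', Nat.choose_one_right]
  exact colorable_induce_add_of_subset_union hAB.ge hAcol hBcol

theorem PerfectlyDivisible.colorable (hG : PerfectlyDivisible G) :
    G.Colorable ((G.cliqueNum + 1).choose 2) :=
  ((hG.colorable_induce Set.univ).of_hom (induceUnivIso G).symm.toHom).mono
    (Nat.choose_le_choose _ (Nat.succ_le_succ (cliqueNum_induce_le _)))

end Perfect

/-- The bound `C(ω - 1 + 2p, 2p)` for `p = k + 1`, written without truncated subtraction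
(at `ω = 0` it is `0` rather than `1`). -/
def colorBound (k ω : ℕ) : ℕ := (ω + 2 * k + 1).choose (2 * k + 2)

theorem colorBound_mono (k : ℕ) : Monotone (colorBound k) :=
  fun _ _ h => Nat.choose_le_choose _ (by omega)

theorem colorBound_succ_succ (k n : ℕ) : colorBound (k + 1) (n + 1) =
    colorBound (k + 1) n + (1 + ∑ j : Fin n, colorBound k (n + 1 - j)) := by
  have hsum : 1 + ∑ j : Fin n, colorBound k (n + 1 - j) = (n + 2 * k + 3).choose (2 * k + 3) := by
    have hstick := Nat.sum_range_add_choose n (2 * k + 2)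
    rw [Finset.sum_range_succ', zero_add, Nat.choose_self,
      show n + (2 * k + 2) + 1 = n + 2 * k + 3 by ring] at hstick
    rw [Fin.sum_univ_eq_sum_range (fun j => colorBound k (n + 1 - j)),
      ← Finset.sum_range_reflect, add_comm, ← hstick]
    congr 1
    refine Finset.sum_congr rfl fun i hi => ?_
    have : n + 1 - (n - 1 - i) = i + 2 := by have := Finset.mem_range.1 hi; omega
    rw [colorBound, this]
    ring_nf
  rw [hsum, colorBound, colorBound, show n + 1 + 2 * (k + 1) + 1 = n + 2 * k + 3 + 1 by ring,
    show 2 * (k + 1) + 2 = 2 * k + 3 + 1 by ring, Nat.choose_succ_succ', add_comm,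
    show n + 2 * (k + 1) + 1 = n + 2 * k + 3 by ring]

section Main

variable {ι : Type} {W : ι → Type} {H : ∀ i, SimpleGraph (W i)}

theorem colorable_induce_compl_neighborSet {k n : ℕ}
    (hk : ∀ (U : Type) [Fintype U] (G' : SimpleGraph U),
      (∀ i, IsEmpty (pK2 k ⊕g H i ↪g G')) → G'.Colorable (colorBound k G'.cliqueNum))
    {V : Type} [Fintype V] {G : SimpleGraph V} (hG : ∀ i, IsEmpty (pK2 (k + 1) ⊕g H i ↪g G))
    (K : completeGraph (Fin (n + 1)) ↪g G) (hω : G.cliqueNum ≤ n + 1) :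
    (G.induce (G.neighborSet (K 0))ᶜ).Colorable (1 + ∑ j : Fin n, colorBound k (n + 1 - j)) := by
  classical
  set a := K 0
  set w : Fin n ↪ V := (Fin.succEmb n).trans K.toEmbedding
  have haw (j : Fin n) : G.Adj a (w j) := K.map_adj_iff.2 (Fin.succ_ne_zero j).symm
  have hw_clique (t : Finset (Fin n)) : G.IsClique (t.map w : Set V) := by
    rw [← Finset.map_map]
    exact (IsClique.top (s := _)).finsetMap_embedding K
  let S : Option (Fin n) → Set V := fun o => o.elim {u | ∀ j, G.Adj (w j) u}
    fun j => {u | ¬G.Adj a u ∧ ¬G.Adj (w j) u ∧ ∀ i < j, G.Adj (w i) u}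
  have hcover : (G.neighborSet a)ᶜ ⊆ ⋃ o, S o := by
    intro u hu
    by_cases hall : ∀ j, G.Adj (w j) u
    · exact Set.mem_iUnion.2 ⟨none, hall⟩
    push Not at hall
    obtain ⟨j, hj, hmin⟩ := WellFounded.has_min wellFounded_lt _ hall
    exact Set.mem_iUnion.2 ⟨some j, hu, hj, fun i hi => by_contra fun h => hmin i h hi⟩
  have hcol : ∀ o, (G.induce (S o)).Colorable (o.elim 1 fun j => colorBound k (n + 1 - j)) := by
    rintro (_ | j)
    · have hbound := cliqueNum_induce_add_card_le (s := S none) (hw_clique Finset.univ)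
        fun u hu x hx => by
          obtain ⟨i, -, rfl⟩ := Finset.mem_map.1 hx
          exact hu i
      rw [Finset.card_map, Finset.card_univ, Fintype.card_fin] at hbound
      exact colorable_one_iff.2 (cliqueFree_two.1 (cliqueFree_of_cliqueNum_lt (by omega)))
    · have hfree (i : ι) : IsEmpty (pK2 k ⊕g H i ↪g G.induce (S (some j))) := by
        refine isEmpty_pK2_sum_embedding_induce (hG i) (haw j) (fun u hu => ?_) fun u hu => ?_ <;>
          obtain ⟨hau, hwu, -⟩ := hu
        · exact ⟨by rintro rfl; exact hwu (haw j).symm, fun h => hau h.symm⟩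
        · exact ⟨by rintro rfl; exact hau (haw j), fun h => hwu h.symm⟩
      have hbound := cliqueNum_induce_add_card_le (s := S (some j)) (hw_clique (Finset.Iio j))
        fun u hu x hx => by
          obtain ⟨i, hi, rfl⟩ := Finset.mem_map.1 hx
          exact hu.2.2 i (Finset.mem_Iio.1 hi)
      rw [Finset.card_map, Fin.card_Iio] at hbound
      exact (hk _ _ hfree).mono (colorBound_mono k (by omega))
  simpa [Fintype.sum_option] using colorable_induce_sum_of_subset_iUnion S _ hcover hcol

theorem colorable_colorBound_succ {k : ℕ}
    (hk : ∀ (U : Type) [Fintype U] (G' : SimpleGraph U),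
      (∀ i, IsEmpty (pK2 k ⊕g H i ↪g G')) → G'.Colorable (colorBound k G'.cliqueNum))
    {V : Type} [Fintype V] {G : SimpleGraph V} (hG : ∀ i, IsEmpty (pK2 (k + 1) ⊕g H i ↪g G)) :
    G.Colorable (colorBound (k + 1) G.cliqueNum) := by
  classical
  induction hω : G.cliqueNum using Nat.strong_induction_on generalizing V with
  | _ m ih =>
  rcases m with _ | n
  · have := cliqueFree_one.1 (cliqueFree_of_cliqueNum_lt (G := G) (by omega))
    exact Colorable.of_isEmpty _
  obtain ⟨t, ht⟩ := G.exists_isNClique_cliqueNum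
  let K := topEmbeddingOfNotCliqueFree (hω ▸ ht).not_cliqueFree
  have hN : (G.induce (G.neighborSet (K 0))).Colorable (colorBound (k + 1) n) := by
    have hbound := cliqueNum_induce_add_card_le (s := G.neighborSet (K 0)) (t := {K 0})
      (by simp) fun u hu x hx => by rwa [Finset.mem_singleton.1 hx]
    rw [Finset.card_singleton] at hbound
    exact (ih _ (by omega) (fun i => isEmpty_embedding_induce (hG i) _) rfl).mono
      (colorBound_mono _ (by omega))
  rw [colorBound_succ_succ]
  exact colorable_add_of_induce_of_induce_compl _ hN
    (colorable_induce_compl_neighborSet hk hG K hω.le)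

theorem colorable_colorBound
    (hdiv : ∀ (V : Type) [Fintype V] (G : SimpleGraph V),
      (∀ i, IsEmpty (H i ↪g G)) → PerfectlyDivisible G) (k : ℕ) :
    ∀ (V : Type) [Fintype V] (G : SimpleGraph V),
      (∀ i, IsEmpty (pK2 k ⊕g H i ↪g G)) → G.Colorable (colorBound k G.cliqueNum) := by
  induction k with
  | zero => exact fun V _ G hG =>
      (hdiv V G fun i => isEmpty_embedding_of_isEmpty_pK2_zero_sum (hG i)).colorable
  | succ k ih => exact fun V _ G hG => colorable_colorBound_succ ih hG

end Main

theorem stmt_13_general (p : ℕ) (hp : 1 ≤ p) {ι : Type} (W : ι → Type)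
    (H : ∀ i, SimpleGraph (W i))
    (hdiv : ∀ (V : Type) [Fintype V] (G : SimpleGraph V),
      (∀ i, IsEmpty (H i ↪g G)) → PerfectlyDivisible G)
    (V : Type) [Fintype V] (G : SimpleGraph V)
    (hG : ∀ i, IsEmpty ((pK2 (p - 1) ⊕g H i) ↪g G)) :
    G.chromaticNumber ≤ (Nat.choose (G.cliqueNum - 1 + 2 * p) (2 * p) : ℕ∞) := by
  obtain ⟨k, rfl⟩ : ∃ k, p = k + 1 := ⟨p - 1, by omega⟩
  rw [Nat.add_sub_cancel] at hG
  refine chromaticNumber_le_iff_colorable.2 ((colorable_colorBound hdiv k V G hG).mono ?_)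
  rw [colorBound, show 2 * (k + 1) = 2 * k + 2 by ring]
  exact Nat.choose_le_choose _ (by omega)

theorem stmt_13 (p : ℕ) (hp : 1 ≤ p) {ι : Type} (W : ι → Type) [∀ i, Fintype (W i)]
    (H : ∀ i, SimpleGraph (W i))
    (hdiv : ∀ (V : Type) [Fintype V] (G : SimpleGraph V),
      (∀ i, IsEmpty (H i ↪g G)) → PerfectlyDivisible G)
    (V : Type) [Fintype V] (G : SimpleGraph V)
    (hG : ∀ i, IsEmpty ((pK2 (p - 1) ⊕g H i) ↪g G)) :
    G.chromaticNumber ≤ (Nat.choose (G.cliqueNum - 1 + 2 * p) (2 * p) : ℕ∞) :=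
  stmt_13_general p hp W H hdiv V G hG
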